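/- arXiv:2410.07371 — 3 statements merged into one kernel-verified Lean document; each statement's English description precedes it below -/
import Mathlib

section
/- The p-th term of the lower central series of W(F) is the set of constant tuples: γ_p(W(F)) = { (λ,λ,…,λ) : λ ∈ F }. -/
open Pointwise

namespace GGS
noncomputable section

variable (p : ℕ)

def shiftAut (G : Type*) [Group G] : Multiplicative (ZMod p) →* MulAut (ZMod p → G) :=
  MonoidHom.mk'
    (fun k =>
      { toFun := fun g i => g (i + Multiplicative.toAdd k)
        invFun := fun g i => g (i - Multiplicative.toAdd k)
        left_inv := fun g => by funext i; simp
        right_inv := fun g => by funext i; simp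
        map_mul' := fun g h => rfl })
    (fun k l => by
      apply MulEquiv.ext
      intro g
      funext i
      show g (i + Multiplicative.toAdd (k * l)) = g (i + Multiplicative.toAdd k + Multiplicative.toAdd l)
      rw [toAdd_mul, add_assoc])

abbrev W (G : Type*) [Group G] :=
  SemidirectProduct (ZMod p → G) (Multiplicative (ZMod p)) (shiftAut p G)

def inlW (G : Type*) [Group G] : (ZMod p → G) →* W p G := SemidirectProduct.inl

def sigma (G : Type*) [Group G] : W p G := SemidirectProduct.inr (Multiplicative.ofAdd (1 : ZMod p))

def baseW (G : Type*) [Group G] : Subgroup (W p G) := (inlW p G).range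

/-- Δ(g) = [g,σ] = g⁻¹ σ⁻¹ g σ, read off in the base group. -/
def Delta (G : Type*) [Group G] (g : ZMod p → G) : ZMod p → G :=
  ((inlW p G g)⁻¹ * (sigma p G)⁻¹ * inlW p G g * sigma p G).left

/-- γ₁* = B(G), γ_{i+1}* = [γ_i*, W(G)]; here `gammaStar n` is γ_{n+1}*. -/
def gammaStar (G : Type*) [Group G] : ℕ → Subgroup (W p G)
  | 0 => baseW p G
  | (n + 1) => ⁅gammaStar G n, ⊤⁆

def lamG (G : Type*) [Group G] (g : G) (i : ℕ) : ZMod p → G :=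
  (Delta p G)^[i - 1] (fun t => if t = 0 then g else 1)

def BSub (G : Type*) [Group G] (H : Subgroup G) : Subgroup (W p G) :=
  Subgroup.map (inlW p G) (Subgroup.pi Set.univ fun _ => H)

def inlF (F : Type*) [AddGroup F] (v : ZMod p → F) : W p (Multiplicative F) :=
  inlW p (Multiplicative F) (fun i => Multiplicative.ofAdd (v i))

def DeltaF (F : Type*) [AddGroup F] (v : ZMod p → F) : ZMod p → F :=
  fun i => Multiplicative.toAdd (Delta p (Multiplicative F) (fun j => Multiplicative.ofAdd (v j)) i)

def lamF (F : Type*) [AddGroup F] [One F] (i : ℕ) : ZMod p → F :=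
  (DeltaF p F)^[i - 1] (fun j => if j = 0 then 1 else 0)

end
end GGS

/-!
Write the base group additively as the `F`-module `ZMod p → F`, on which `σ` acts by the shift
`S`, and put `Δ = S - 1`. Every commutator `⁅x, y⁆` of `W(F)` lies in the base and equals
`(1 - S^b) u + (S^a - 1) v`, where `a`, `b` are the `⟨σ⟩`-components and `u`, `v` the base
components of `x`, `y`. Each `S^a - 1` is a multiple of `Δ` in the commutative algebra `F[S]`,
so by induction `γ_{n+1}` lies in the image of `Δⁿ` for `n ≥ 1`; conversely `⁅u, σ⁆ = -Δ u`
shows that this image lies in `γ_{n+1}`. In characteristic `p`,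
`Δ^(p-1) = (S - 1)^(p-1) = 1 + S + ⋯ + S^(p-1)`, whose image consists of the constant tuples.
-/

namespace GGS

open Finset Polynomial
open scoped commutatorElement

section Trace

variable {p : ℕ} [Fact p.Prime]

theorem geom_sum_X_eq_X_sub_one_pow {R : Type*} [CommRing R] [CharP R p] :
    ∑ i ∈ range p, (X : R[X]) ^ i = (X - 1) ^ (p - 1) := by
  have := cyclotomic_mul_prime_eq_pow_of_not_dvd R (n := 1) (Fact.out : p.Prime).not_dvd_one
  rwa [one_mul, cyclotomic_prime, cyclotomic_one] at this

theorem geom_sum_eq_sub_one_pow (R : Type*) {A : Type*} [CommRing R] [CharP R p] [Ring A]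
    [Algebra R A] (t : A) :
    ∑ i ∈ range p, t ^ i = (t - 1) ^ (p - 1) := by
  simpa using congrArg (aeval (R := R) t) (geom_sum_X_eq_X_sub_one_pow (p := p))

end Trace

theorem sum_range_natCast_zmod {p : ℕ} [NeZero p] {M : Type*} [AddCommMonoid M]
    (f : ZMod p → M) : ∑ k ∈ range p, f k = ∑ j, f j :=
  sum_nbij' (↑) ZMod.val (by simp) (by simp [ZMod.val_lt])
    (fun _ hk => ZMod.val_natCast_of_lt (mem_range.1 hk)) (fun j _ => ZMod.natCast_zmod_val j)
    (fun _ _ => rfl)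

section Shift

variable {p : ℕ} (F : Type*) [CommRing F]

def shift (b : ZMod p) : Module.End F (ZMod p → F) := LinearMap.funLeft F F (· + b)

def diff : Module.End F (ZMod p → F) := shift F 1 - 1

variable {F}

@[simp]
theorem shift_apply (b : ZMod p) (v : ZMod p → F) (i : ZMod p) : shift F b v i = v (i + b) := rfl

@[simp]
theorem shift_zero : shift F (0 : ZMod p) = 1 := by
  ext; simp

theorem shift_one_pow (k : ℕ) : shift F (1 : ZMod p) ^ k = shift F (k : ZMod p) := by
  induction k with
  | zero => simp
  | succ k ih => ext; simp [pow_succ, ih, add_assoc]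

theorem shift_sub_one_mul_diff_pow_eq [NeZero p] (b : ZMod p) (n : ℕ) :
    (shift F b - 1) * diff F ^ n = diff F ^ (n + 1) * ∑ j ∈ range b.val, shift F 1 ^ j := by
  have hcomm : Commute (diff F ^ (n + 1)) (∑ j ∈ range b.val, shift F (1 : ZMod p) ^ j) :=
    Commute.sum_right _ _ _ fun j _ =>
      (((Commute.refl _).pow_right j).sub_left (Commute.one_left _)).pow_left (n + 1)
  rw [hcomm.eq, pow_succ', ← mul_assoc, diff, geom_sum_mul, shift_one_pow,
    ZMod.natCast_zmod_val]

theorem shift_sub_one_diff_pow_mem_range [NeZero p] (b : ZMod p) (n : ℕ) (v : ZMod p → F) :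
    (shift F b - 1) ((diff F ^ n) v) ∈ LinearMap.range (diff F ^ (n + 1)) := by
  rw [← Module.End.mul_apply, shift_sub_one_mul_diff_pow_eq, Module.End.mul_apply]
  exact LinearMap.mem_range_self _ _

theorem diff_pow_pred_apply [Fact p.Prime] [CharP F p] (v : ZMod p → F) :
    (diff F ^ (p - 1)) v = fun _ => ∑ j, v j := by
  ext i
  rw [diff, ← geom_sum_eq_sub_one_pow F, LinearMap.sum_apply, Finset.sum_apply]
  simp only [shift_one_pow, shift_apply]
  rw [sum_range_natCast_zmod (fun k => v (i + k))]
  exact Equiv.sum_comp (Equiv.addLeft i) v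

end Shift

section Commutator

variable {p : ℕ} {F : Type*} [CommRing F]

@[simp]
theorem shiftAut_apply (G : Type*) [Group G] (k : Multiplicative (ZMod p)) (g : ZMod p → G)
    (i : ZMod p) : shiftAut p G k g i = g (i + k.toAdd) := rfl

@[simp]
theorem inlF_left (v : ZMod p → F) (i : ZMod p) : (inlF p F v).left i = .ofAdd (v i) := rfl

@[simp]
theorem inlF_right (v : ZMod p → F) : (inlF p F v).right = 1 := rfl

def baseVec (x : W p (Multiplicative F)) : ZMod p → F := fun i => Multiplicative.toAdd (x.left i)

@[simp]
theorem baseVec_inlF (v : ZMod p → F) : baseVec (inlF p F v) = v := rfl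

theorem commutatorElement_eq_inlF (x y : W p (Multiplicative F)) :
    ⁅x, y⁆ = inlF p F ((1 - shift F y.right.toAdd) (baseVec x)
      + (shift F x.right.toAdd - 1) (baseVec y)) := by
  refine SemidirectProduct.ext ?_ ?_
  · ext i
    simp only [commutatorElement_def, baseVec, shiftAut_apply, SemidirectProduct.mul_left,
      SemidirectProduct.inv_left, SemidirectProduct.inv_right, SemidirectProduct.mul_right,
      Pi.mul_apply, Pi.inv_apply, toAdd_mul, toAdd_inv, toAdd_ofAdd, inlF_left, LinearMap.sub_apply,
      Module.End.one_apply, shift_apply, Pi.add_apply, Pi.sub_apply]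
    abel_nf
  · simp [commutatorElement_def, mul_comm x.right]

theorem commutatorElement_inlF_sigma (v : ZMod p → F) :
    ⁅inlF p F v, sigma p (Multiplicative F)⁆ = inlF p F (-diff F v) := by
  rw [commutatorElement_eq_inlF]
  congr 1
  ext i
  simp [sigma, diff]

theorem inlF_diff_pow_mem_lowerCentralSeries (n : ℕ) (v : ZMod p → F) :
    inlF p F ((diff F ^ n) v) ∈ (⊤ : Subgroup (W p (Multiplicative F))).lowerCentralSeries n := by
  induction n generalizing v with
  | zero => trivial
  | succ n ih =>
    have h : inlF p F ((diff F ^ (n + 1)) v) = ⁅inlF p F ((diff F ^ n) (-v)), sigma p _⁆ := by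
      rw [commutatorElement_inlF_sigma, map_neg, map_neg, neg_neg, pow_succ', Module.End.mul_apply]
    rw [h]
    exact Subgroup.commutator_mem_commutator (ih _) trivial

def inlFHom : Multiplicative (ZMod p → F) →* W p (Multiplicative F) :=
  (inlW p _).comp (MulEquiv.piMultiplicative _).toMonoidHom

@[simp]
theorem inlFHom_ofAdd (v : ZMod p → F) : inlFHom (.ofAdd v) = inlF p F v := rfl

variable (F) in
def diffPowImage (n : ℕ) : Subgroup (W p (Multiplicative F)) :=
  (LinearMap.range (diff F ^ n)).toAddSubgroup.toSubgroup.map inlFHom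

theorem mem_diffPowImage {n : ℕ} {x : W p (Multiplicative F)} :
    x ∈ diffPowImage F n ↔ ∃ v, inlF p F ((diff F ^ n) v) = x := by
  simp [diffPowImage]

theorem inlF_mem_diffPowImage {n : ℕ} {v : ZMod p → F} (hv : v ∈ LinearMap.range (diff F ^ n)) :
    inlF p F v ∈ diffPowImage F n := by
  obtain ⟨w, rfl⟩ := hv
  exact mem_diffPowImage.2 ⟨w, rfl⟩

variable [NeZero p]

theorem shift_sub_one_mem_range_diff (b : ZMod p) (v : ZMod p → F) :
    (shift F b - 1) v ∈ LinearMap.range (diff F) := by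
  simpa using shift_sub_one_diff_pow_mem_range b 0 v

theorem commutatorElement_mem_diffPowImage_one (x y : W p (Multiplicative F)) :
    ⁅x, y⁆ ∈ diffPowImage F 1 := by
  rw [commutatorElement_eq_inlF]
  refine inlF_mem_diffPowImage (add_mem ?_ ?_) <;> rw [pow_one]
  · rw [← neg_sub, LinearMap.neg_apply]
    exact neg_mem (shift_sub_one_mem_range_diff _ _)
  · exact shift_sub_one_mem_range_diff _ _

theorem commutatorElement_mem_diffPowImage_succ {n : ℕ} {x : W p (Multiplicative F)}
    (hx : x ∈ diffPowImage F n) (y : W p (Multiplicative F)) :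
    ⁅x, y⁆ ∈ diffPowImage F (n + 1) := by
  obtain ⟨w, rfl⟩ := mem_diffPowImage.1 hx
  rw [commutatorElement_eq_inlF]
  refine inlF_mem_diffPowImage ?_
  simp only [baseVec_inlF, inlF_right, toAdd_one, shift_zero, sub_self, LinearMap.zero_apply,
    add_zero, ← neg_sub (shift F _), LinearMap.neg_apply]
  exact neg_mem (shift_sub_one_diff_pow_mem_range _ n w)

theorem lowerCentralSeries_succ_le_diffPowImage (n : ℕ) :
    (⊤ : Subgroup (W p (Multiplicative F))).lowerCentralSeries (n + 1) ≤ diffPowImage F (n + 1) := by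
  induction n with
  | zero =>
    exact Subgroup.commutator_le.2 fun x _ y _ => commutatorElement_mem_diffPowImage_one x y
  | succ n ih =>
    exact Subgroup.commutator_le.2 fun x hx y _ => commutatorElement_mem_diffPowImage_succ (ih hx) y

end Commutator

end GGS

open GGS

theorem statement4_general (p : ℕ) [Fact p.Prime]
    (F : Type*) [Field F] [CharP F p] :
    ((Subgroup.lowerCentralSeries (⊤ : Subgroup (W p (Multiplicative F))) (p - 1) :
        Subgroup (W p (Multiplicative F))) : Set (W p (Multiplicative F)))
      = {x : W p (Multiplicative F) | ∃ c : F, x = inlF p F (fun _ => c)} := by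
  obtain ⟨n, rfl⟩ : ∃ n, p = n + 2 := Nat.exists_eq_add_of_le' (Fact.out : p.Prime).two_le
  ext x
  constructor
  · intro hx
    obtain ⟨w, rfl⟩ := mem_diffPowImage.1 (lowerCentralSeries_succ_le_diffPowImage n hx)
    exact ⟨∑ j, w j, congrArg _ (diff_pow_pred_apply w)⟩
  · rintro ⟨c, rfl⟩
    have h := inlF_diff_pow_mem_lowerCentralSeries (n + 2 - 1) (Pi.single (0 : ZMod (n + 2)) c)
    rwa [diff_pow_pred_apply, Fintype.sum_pi_single'] at h

/-- γ_p(W(F)) = { (λ,λ,…,λ) : λ ∈ F } is the set of constant tuples in B(F).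
    (γ_p(W(F)) = `lowerCentralSeries (W p (Multiplicative F)) (p-1)`.) -/
theorem statement4 (p : ℕ) [Fact p.Prime] (hp : Odd p)
    (F : Type*) [Field F] [Fintype F] [CharP F p] :
    ((Subgroup.lowerCentralSeries (⊤ : Subgroup (W p (Multiplicative F))) (p - 1) :
        Subgroup (W p (Multiplicative F))) : Set (W p (Multiplicative F)))
      = {x : W p (Multiplicative F) | ∃ c : F, x = inlF p F (fun _ => c)} :=
  statement4_general p F
end

section
/- Let A be an elementary abelian finite p-group and let 1 ≤ i ≤ p. Then the map A → γ_i*(W(A))/γ_{i+1}*(W(A)) sending a to the coset of λ_i(a) is a group isomorphism; in particular the images of the tuples λ_i(a), a ∈ A, yield all elements of γ_i*(W(A))/γ_{i+1}*(W(A)) without repetitions. -/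
open Pointwise

open GGS

open scoped commutatorElement
open Finset Polynomial

/-!
For abelian A, Δ is the endomorphism (Δg)ᵢ = gᵢ⁻¹ gᵢ₋₁ of B(A), and [u, x] = u · (x acting on u)⁻¹ for u ∈ B(A). Every shift is a
power of the shift by one, and u times the inverse of its shift by one is Δ of that shift, so
induction gives γ*_{n+1}(W(A)) = Δⁿ(B(A)).

Additively Δ = s − 1 for the cyclic shift s, and since (X − 1)^{p−1} = 1 + X + ⋯ + X^{p−1} over
𝔽_p, Δ^{p−1} sends a tuple to the constant tuple of its product. Hence Δ^p = 1, so applying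
Δ^{p−i} to λ_i(a) = Δ^i(w) gives a = 1. Conversely Δ(B(A)) is the set of tuples with product 1,
so every w ∈ B(A) is (∏ w, 1, …, 1) times an element of Δ(B(A)), and Δ^{i−1}(w) ≡ λ_i(∏ w)
modulo Δ^i(B(A)).
-/

theorem Polynomial.X_sub_one_pow_pred_eq_geom_sum {R : Type*} [CommRing R] [IsDomain R]
    (p : ℕ) [Fact p.Prime] [CharP R p] :
    ((X : R[X]) - 1) ^ (p - 1) = ∑ i ∈ range p, X ^ i := by
  apply mul_right_cancel₀ (X_sub_C_ne_zero (1 : R))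
  rw [C_1, ← pow_succ, Nat.sub_add_cancel (Fact.out : p.Prime).one_le, sub_pow_char, one_pow,
    geom_sum_mul]

@[to_additive]
theorem ZMod.prod_range_natCast {M : Type*} [CommMonoid M] (n : ℕ) [NeZero n] (f : ZMod n → M) :
    ∏ k ∈ range n, f k = ∏ j, f j :=
  prod_nbij' (↑) ZMod.val (by simp) (by simp [ZMod.val_lt])
    (fun k hk => ZMod.val_cast_of_lt (mem_range.1 hk)) (fun j _ => ZMod.natCast_zmod_val j)
    (fun _ _ => rfl)

def cycShift (R M : Type*) [Semiring R] [AddCommMonoid M] [Module R M] (n : ℕ) :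
    Module.End R (ZMod n → M) :=
  LinearMap.funLeft R M (· - 1)

section
variable {R M : Type*} [Semiring R] [AddCommMonoid M] [Module R M] {n : ℕ}

theorem cycShift_pow_apply (m : ℕ) (v : ZMod n → M) (i : ZMod n) :
    (cycShift R M n ^ m) v i = v (i - m) := by
  induction m generalizing v i with
  | zero => simp
  | succ m ih =>
    rw [pow_succ, Module.End.mul_apply, ih, cycShift, LinearMap.funLeft_apply, Nat.cast_succ,
      sub_sub, add_comm]

end

theorem cycShift_sub_one_pow_pred_apply {M : Type*} [AddCommGroup M] {p : ℕ} [Fact p.Prime]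
    [Module (ZMod p) M] (v : ZMod p → M) (i : ZMod p) :
    ((cycShift (ZMod p) M p - 1) ^ (p - 1)) v i = ∑ j, v j := by
  have norm_eq :
      (cycShift (ZMod p) M p - 1) ^ (p - 1) = ∑ m ∈ range p, cycShift (ZMod p) M p ^ m := by
    simpa using
      congrArg (aeval (cycShift (ZMod p) M p)) (X_sub_one_pow_pred_eq_geom_sum (R := ZMod p) p)
  simp only [norm_eq, LinearMap.sum_apply, Finset.sum_apply, cycShift_pow_apply]
  rw [ZMod.sum_range_natCast p (fun j => v (i - j))]
  exact (Equiv.subLeft i).sum_comp v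

namespace GGS

section
variable {p : ℕ} {G : Type*} [Group G]

theorem delta_apply (g : ZMod p → G) (i : ZMod p) : Delta p G g i = (g i)⁻¹ * g (i - 1) := by
  rw [Delta, inlW, sigma]
  simp only [SemidirectProduct.mul_left, SemidirectProduct.inv_left, SemidirectProduct.left_inl,
    SemidirectProduct.right_inl, SemidirectProduct.left_inr, SemidirectProduct.right_inr,
    SemidirectProduct.mul_right, SemidirectProduct.inv_right]
  simp [shiftAut, sub_eq_add_neg]

theorem inlW_delta (g : ZMod p → G) :
    inlW p G (Delta p G g) = ⁅(inlW p G g)⁻¹, (sigma p G)⁻¹⁆ := by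
  apply SemidirectProduct.ext
  · simp only [Delta, commutatorElement_def, inv_inv]
    rfl
  · simp [inlW, sigma, commutatorElement_def]

theorem lamG_eq_delta_iterate_mulSingle (g : G) (i : ℕ) :
    lamG p G g i = (Delta p G)^[i - 1] (Pi.mulSingle 0 g) := by
  rw [lamG]
  congr 1
  funext t
  rw [Pi.mulSingle_apply]

theorem delta_shiftAut (k : Multiplicative (ZMod p)) (g : ZMod p → G) :
    Delta p G (shiftAut p G k g) = shiftAut p G k (Delta p G g) := by
  funext i
  simp [delta_apply, shiftAut, sub_add_eq_add_sub]

end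

section
variable {p : ℕ} {A : Type*} [CommGroup A]

theorem inlW_commutator (u : ZMod p → A) (x : W p A) :
    ⁅inlW p A u, x⁆ = inlW p A (u * (shiftAut p A x.right u)⁻¹) := by
  apply SemidirectProduct.ext
  · simp only [commutatorElement_def, inlW, SemidirectProduct.mul_left,
      SemidirectProduct.inv_left, SemidirectProduct.left_inl, SemidirectProduct.right_inl,
      SemidirectProduct.mul_right, SemidirectProduct.inv_right, map_mul, map_inv,
      one_mul, mul_one, inv_one, map_one]
    funext i
    simp [mul_comm, mul_left_comm]
  · simp [commutatorElement_def, inlW]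

variable (p A) in
def deltaHom : Monoid.End (ZMod p → A) :=
  MonoidHom.mk' (Delta p A) fun g h => by
    funext i
    simp only [delta_apply, Pi.mul_apply, mul_inv]
    exact mul_mul_mul_comm _ _ _ _

theorem mem_range_deltaHom_pow {n : ℕ} {u : ZMod p → A} :
    u ∈ (deltaHom p A ^ n).range ↔ ∃ w, (Delta p A)^[n] w = u :=
  Iff.rfl

theorem shiftAut_mem_range_deltaHom_pow {n : ℕ} {u : ZMod p → A}
    (hu : u ∈ (deltaHom p A ^ n).range) (k : Multiplicative (ZMod p)) :
    shiftAut p A k u ∈ (deltaHom p A ^ n).range := by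
  obtain ⟨w, rfl⟩ := mem_range_deltaHom_pow.1 hu
  exact ⟨shiftAut p A k w, Function.Commute.iterate_left (fun g => delta_shiftAut k g) n w⟩

theorem mul_inv_shiftAut_mem_range_deltaHom_pow [NeZero p] {n : ℕ} {u : ZMod p → A}
    (hu : u ∈ (deltaHom p A ^ n).range) (k : Multiplicative (ZMod p)) :
    u * (shiftAut p A k u)⁻¹ ∈ (deltaHom p A ^ (n + 1)).range := by
  have step : u * (shiftAut p A (.ofAdd 1) u)⁻¹ ∈ (deltaHom p A ^ (n + 1)).range := by
    obtain ⟨w, hw⟩ := mem_range_deltaHom_pow.1 (shiftAut_mem_range_deltaHom_pow hu (.ofAdd 1))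
    refine mem_range_deltaHom_pow.2 ⟨w, ?_⟩
    rw [Function.iterate_succ_apply', hw]
    funext i
    simp [delta_apply, shiftAut, mul_comm]
  obtain ⟨m, rfl⟩ : ∃ m : ℕ, (Multiplicative.ofAdd (1 : ZMod p)) ^ m = k :=
    ⟨(Multiplicative.toAdd k).val, by rw [← ofAdd_nsmul, nsmul_one, ZMod.natCast_zmod_val]; rfl⟩
  induction m with
  | zero => simp
  | succ m ih =>
    have h : u * (shiftAut p A (.ofAdd 1 ^ (m + 1)) u)⁻¹ = u * (shiftAut p A (.ofAdd 1 ^ m) u)⁻¹ *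
        shiftAut p A (.ofAdd 1 ^ m) (u * (shiftAut p A (.ofAdd 1) u)⁻¹) := by
      rw [pow_succ, map_mul, MulAut.mul_apply, map_mul, map_inv]
      group
    rw [h]
    exact mul_mem ih (shiftAut_mem_range_deltaHom_pow step _)

theorem gammaStar_eq_map [NeZero p] (n : ℕ) :
    gammaStar p A n = (deltaHom p A ^ n).range.map (inlW p A) := by
  induction n with
  | zero =>
    rw [gammaStar, baseW, MonoidHom.range_eq_map]
    congr 1
    exact (eq_top_iff.2 fun g _ => mem_range_deltaHom_pow.2 ⟨g, rfl⟩).symm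
  | succ n ih =>
    apply le_antisymm
    · rw [gammaStar, Subgroup.commutator_le]
      intro x hx y _
      rw [ih] at hx
      obtain ⟨u, hu, rfl⟩ := hx
      rw [inlW_commutator]
      exact Subgroup.mem_map_of_mem _ (mul_inv_shiftAut_mem_range_deltaHom_pow hu _)
    · rintro _ ⟨u, hu, rfl⟩
      obtain ⟨w, rfl⟩ := mem_range_deltaHom_pow.1 hu
      rw [Function.iterate_succ_apply', inlW_delta]
      refine Subgroup.commutator_mem_commutator (inv_mem ?_) (Subgroup.mem_top _)
      rw [ih]
      exact Subgroup.mem_map_of_mem _ (mem_range_deltaHom_pow.2 ⟨w, rfl⟩)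

theorem mem_gammaStar_iff [NeZero p] {n : ℕ} {x : W p A} :
    x ∈ gammaStar p A n ↔ ∃ w, inlW p A ((Delta p A)^[n] w) = x := by
  simp only [gammaStar_eq_map, Subgroup.mem_map, mem_range_deltaHom_pow]
  constructor
  · rintro ⟨_, ⟨w, rfl⟩, rfl⟩
    exact ⟨w, rfl⟩
  · rintro ⟨w, rfl⟩
    exact ⟨_, ⟨w, rfl⟩, rfl⟩

theorem delta_iterate_mul (n : ℕ) (g h : ZMod p → A) :
    (Delta p A)^[n] (g * h) = (Delta p A)^[n] g * (Delta p A)^[n] h :=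
  (deltaHom p A ^ n).map_mul g h

theorem prod_delta [NeZero p] (g : ZMod p → A) : ∏ j, Delta p A g j = 1 := by
  simp only [delta_apply, prod_mul_distrib, prod_inv_distrib]
  rw [← (Equiv.subRight 1).prod_comp g]
  exact inv_mul_cancel _

theorem exists_delta_eq_of_prod_eq_one [NeZero p] {u : ZMod p → A} (hu : ∏ j, u j = 1) :
    ∃ g, Delta p A g = u := by
  obtain ⟨n, rfl⟩ := Nat.exists_eq_succ_of_ne_zero (NeZero.ne p)
  refine ⟨fun j => (∏ k ∈ range (j.val + 1), u k)⁻¹, funext fun j => ?_⟩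
  have hval : (j - 1).val = if j = 0 then n else j.val - 1 := Fin.coe_sub_one j
  rw [delta_apply, inv_inv, hval]
  split_ifs with hj
  · subst hj
    rw [ZMod.prod_range_natCast, hu]
    simp
  · rw [Nat.sub_add_cancel (Nat.one_le_iff_ne_zero.2 ((ZMod.val_ne_zero j).2 hj)),
      prod_range_succ, ZMod.natCast_zmod_val, mul_comm, inv_mul_cancel_left]

theorem ofMul_delta_iterate_apply (R : Type*) [Semiring R] [Module R (Additive A)] (n : ℕ)
    (g : ZMod p → A) (i : ZMod p) :
    Additive.ofMul ((Delta p A)^[n] g i)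
      = ((cycShift R (Additive A) p - 1) ^ n) (fun j => Additive.ofMul (g j)) i := by
  induction n generalizing i with
  | zero => rfl
  | succ n ih =>
    rw [Function.iterate_succ_apply', pow_succ', Module.End.mul_apply, delta_apply, ofMul_mul,
      ofMul_inv, ih, ih, LinearMap.sub_apply, Module.End.one_apply, Pi.sub_apply, cycShift,
      LinearMap.funLeft_apply, neg_add_eq_sub]

theorem delta_iterate_p_sub_one_apply [Fact p.Prime] (hA : ∀ a : A, a ^ p = 1) (g : ZMod p → A)
    (i : ZMod p) : (Delta p A)^[p - 1] g i = ∏ j, g j := by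
  let _ : Module (ZMod p) (Additive A) :=
    AddCommGroup.zmodModule fun x => by rw [← ofMul_toMul x, ← ofMul_pow, hA, ofMul_one]
  apply Additive.ofMul.injective
  rw [ofMul_delta_iterate_apply (ZMod p), cycShift_sub_one_pow_pred_apply, ofMul_prod]

theorem delta_iterate_p_eq_one [Fact p.Prime] (hA : ∀ a : A, a ^ p = 1) (g : ZMod p → A) :
    (Delta p A)^[p] g = 1 := by
  have h : (Delta p A)^[p] g = (Delta p A)^[p - 1] (Delta p A g) := by
    rw [← Function.iterate_succ_apply, Nat.succ_eq_add_one,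
      Nat.sub_add_cancel (Fact.out : p.Prime).one_le]
  funext i
  rw [h, delta_iterate_p_sub_one_apply hA, prod_delta, Pi.one_apply]

theorem lamG_mul (a b : A) (i : ℕ) : lamG p A (a * b) i = lamG p A a i * lamG p A b i := by
  simp only [lamG_eq_delta_iterate_mulSingle, Pi.mulSingle_mul, delta_iterate_mul]

theorem eq_one_of_lamG_eq_delta_iterate [Fact p.Prime] (hA : ∀ a : A, a ^ p = 1) {i : ℕ}
    (hi1 : 1 ≤ i) (hip : i ≤ p) {a : A} {w : ZMod p → A}
    (h : lamG p A a i = (Delta p A)^[i] w) : a = 1 := by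
  have h' := congrArg (fun v => (Delta p A)^[p - i] v 0) h
  simp only [lamG_eq_delta_iterate_mulSingle, ← Function.iterate_add_apply] at h'
  rw [show p - i + (i - 1) = p - 1 by omega, show p - i + i = p by omega,
    delta_iterate_p_sub_one_apply hA, delta_iterate_p_eq_one hA] at h'
  simpa using h'

theorem exists_delta_iterate_eq_mul_lamG [NeZero p] {i : ℕ} (hi : 1 ≤ i) (w : ZMod p → A) :
    ∃ a g, (Delta p A)^[i - 1] w = (Delta p A)^[i] g * lamG p A a i := by
  obtain ⟨g, hg⟩ := exists_delta_eq_of_prod_eq_one (u := w * (Pi.mulSingle 0 (∏ j, w j))⁻¹)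
    (by simp [prod_mul_distrib, prod_inv_distrib])
  obtain ⟨k, rfl⟩ : ∃ k, i = k + 1 := ⟨i - 1, by omega⟩
  refine ⟨∏ j, w j, g, ?_⟩
  rw [Function.iterate_succ_apply, hg, lamG_eq_delta_iterate_mulSingle, Nat.add_sub_cancel,
    ← delta_iterate_mul, inv_mul_cancel_right]

end

end GGS

theorem statement8_general (p : ℕ) [Fact p.Prime]
    (A : Type*) [CommGroup A] (hA : ∀ a : A, a ^ p = 1)
    (i : ℕ) (hi1 : 1 ≤ i) (hip : i ≤ p) :
    (∀ a : A, inlW p A (lamG p A a i) ∈ gammaStar p A (i - 1))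
    ∧ (∀ a b : A,
        inlW p A (lamG p A (a * b) i * (lamG p A a i * lamG p A b i)⁻¹) ∈ gammaStar p A i)
    ∧ (∀ a : A, inlW p A (lamG p A a i) ∈ gammaStar p A i → a = 1)
    ∧ (∀ x : W p A, x ∈ gammaStar p A (i - 1) →
        ∃ a : A, x * (inlW p A (lamG p A a i))⁻¹ ∈ gammaStar p A i) := by
  refine ⟨fun a => ?_, fun a b => ?_, fun a ha => ?_, fun x hx => ?_⟩
  · exact mem_gammaStar_iff.2 ⟨_, by rw [lamG_eq_delta_iterate_mulSingle]⟩
  · rw [lamG_mul, mul_inv_cancel, map_one]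
    exact one_mem _
  · obtain ⟨w, hw⟩ := mem_gammaStar_iff.1 ha
    exact eq_one_of_lamG_eq_delta_iterate hA hi1 hip (SemidirectProduct.inl_injective hw).symm
  · obtain ⟨w, rfl⟩ := mem_gammaStar_iff.1 hx
    obtain ⟨a, g, hw⟩ := exists_delta_iterate_eq_mul_lamG hi1 w
    exact ⟨a, mem_gammaStar_iff.2 ⟨g, by rw [hw, map_mul, mul_inv_cancel_right]⟩⟩

/-- For an elementary abelian finite p-group A and 1 ≤ i ≤ p, the map
    A → γ_i*(W(A))/γ_{i+1}*(W(A)), a ↦ λ_i(a)·γ_{i+1}*(W(A)), is a group isomorphism: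
    it lands in γ_i*(W(A)), is a homomorphism modulo γ_{i+1}*(W(A)), is injective and
    surjective onto γ_i*(W(A))/γ_{i+1}*(W(A)).
    (γ_i*(W(A)) = `gammaStar p A (i-1)`, λ_i(a) = `lamG p A a i`.) -/
theorem statement8 (p : ℕ) [Fact p.Prime] (hp : Odd p)
    (A : Type*) [CommGroup A] [Fintype A] (hA : ∀ a : A, a ^ p = 1)
    (i : ℕ) (hi1 : 1 ≤ i) (hip : i ≤ p) :
    (∀ a : A, inlW p A (lamG p A a i) ∈ gammaStar p A (i - 1))
    ∧ (∀ a b : A,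
        inlW p A (lamG p A (a * b) i * (lamG p A a i * lamG p A b i)⁻¹) ∈ gammaStar p A i)
    ∧ (∀ a : A, inlW p A (lamG p A a i) ∈ gammaStar p A i → a = 1)
    ∧ (∀ x : W p A, x ∈ gammaStar p A (i - 1) →
        ∃ a : A, x * (inlW p A (lamG p A a i))⁻¹ ∈ gammaStar p A i) :=
  statement8_general p A hA i hi1 hip
end

section
/- Let λ = (λ_0, λ_1, …, λ_{p−1}) ∈ B(F_p). Then in W(F_p) the (p−2)-fold iterated commutator [λ, σ, …, σ] (taking the commutator with σ exactly p−2 times) equals (−α+β, −2α+β, −3α+β, …, −(p−1)α+β, β), where α = λ_0 + λ_1 + ⋯ + λ_{p−1} and β = λ_1 + 2λ_2 + ⋯ + (p−1)λ_{p−1} in F_p. -/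
open Pointwise

open GGS

open GGS Finset

lemma deltaF_eq (p : ℕ) (F : Type*) [AddCommGroup F] (v : ZMod p → F) :
    DeltaF p F v = fun i => v (i - 1) - v i := by
  funext i
  show Multiplicative.toAdd _ = _
  simp only [DeltaF, Delta, inlW, GGS.sigma, map_inv, SemidirectProduct.mul_left,
    SemidirectProduct.mul_right, SemidirectProduct.inv_left, SemidirectProduct.inv_right,
    SemidirectProduct.left_inl, SemidirectProduct.right_inl, SemidirectProduct.left_inr,
    SemidirectProduct.right_inr]
  simp [GGS.shiftAut, MulAut.inv_def, MulEquiv.symm, MulEquiv.mk', sub_eq_add_neg, add_comm]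

lemma iter_formula (p : ℕ) (n : ℕ) (v : ZMod p → ZMod p) (j : ZMod p) :
    (DeltaF p (ZMod p))^[n] v j
      = ∑ k ∈ range (n + 1), (-1 : ZMod p) ^ (n + k) * (n.choose k : ZMod p) * v (j - k) := by
  induction n generalizing j with
  | zero => simp
  | succ n ih =>
    rw [Function.iterate_succ_apply', deltaF_eq]
    simp only
    rw [ih, ih]
    have hG : ∀ k ∈ range (n + 1),
        (-1 : ZMod p) ^ (n + 1 + (k + 1)) * ((n + 1).choose (k + 1) : ZMod p) * v (j - ↑(k + 1))
        = (-1 : ZMod p) ^ (n + k) * (n.choose k : ZMod p) * v ((j - 1) - k)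
          + (-1 : ZMod p) ^ (n + 1 + (k + 1)) * (n.choose (k + 1) : ZMod p) * v (j - ↑(k + 1)) := by
      intro k _
      rw [Nat.choose_succ_succ]
      push_cast
      have h1 : (j : ZMod p) - ((k : ZMod p) + 1) = (j - 1) - k := by ring
      have h2 : (-1 : ZMod p) ^ (n + 1 + (k + 1)) = (-1 : ZMod p) ^ (n + k) := by
        have : n + 1 + (k + 1) = (n + k) + 2 := by ring
        rw [this, pow_add]; ring
      rw [h2, h1]
      ring
    rw [Finset.sum_range_succ' (fun k => (-1 : ZMod p) ^ (n + 1 + k) * ((n + 1).choose k : ZMod p) * v (j - k)) (n + 1)]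
    rw [Finset.sum_congr rfl hG, Finset.sum_add_distrib]
    have hshift : ∑ k ∈ range (n + 1),
        (-1 : ZMod p) ^ (n + 1 + (k + 1)) * (n.choose (k + 1) : ZMod p) * v (j - ↑(k + 1))
        = (∑ k ∈ range (n + 1), (-1 : ZMod p) ^ (n + 1 + k) * (n.choose k : ZMod p) * v (j - k))
          + (-1 : ZMod p) ^ (n + 1 + (n + 1)) * (n.choose (n + 1) : ZMod p) * v (j - ↑(n + 1))
          - (-1 : ZMod p) ^ (n + 1) * (n.choose 0 : ZMod p) * v j := by
      rw [← Finset.sum_range_succ (fun k => (-1 : ZMod p) ^ (n + 1 + k) * (n.choose k : ZMod p) * v (j - k)) (n + 1)]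
      rw [Finset.sum_range_succ' (fun k => (-1 : ZMod p) ^ (n + 1 + k) * (n.choose k : ZMod p) * v (j - k)) (n + 1)]
      push_cast
      simp only [sub_zero]
      ring
    rw [hshift]
    have hneg : ∀ k ∈ range (n + 1),
        (-1 : ZMod p) ^ (n + 1 + k) * (n.choose k : ZMod p) * v (j - k)
        = -((-1 : ZMod p) ^ (n + k) * (n.choose k : ZMod p) * v (j - k)) := by
      intro k _
      have : n + 1 + k = (n + k) + 1 := by ring
      rw [this, pow_succ]
      ring
    rw [Finset.sum_congr rfl hneg, Finset.sum_neg_distrib]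
    simp [Nat.choose_succ_self]
    ring

lemma choose_mod_p (p : ℕ) [Fact p.Prime] (k : ℕ) (hk : k ≤ p - 2) :
    ((p - 2).choose k : ZMod p) = (-1 : ZMod p) ^ k * ((k : ZMod p) + 1) := by
  have hp := (Fact.out : p.Prime)
  have hp2 : 2 ≤ p := hp.two_le
  induction k with
  | zero => simp
  | succ k ih =>
    have hk' : k ≤ p - 2 := Nat.le_of_succ_le hk
    have hcast : (((k : ZMod p)) + 1) ≠ 0 := by
      have hlt : k + 1 < p := by omega
      have h0 : ¬ p ∣ (k + 1) := fun hdvd =>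
        absurd (Nat.le_of_dvd (Nat.succ_pos k) hdvd) (by omega)
      have : ((k + 1 : ℕ) : ZMod p) ≠ 0 := by
        rw [Ne, ZMod.natCast_eq_zero_iff]; exact h0
      simpa using this
    have key : ((p - 2).choose (k + 1) : ZMod p) * ((k : ZMod p) + 1)
        = ((p - 2).choose k : ZMod p) * ((p - 2 - k : ℕ) : ZMod p) := by
      have := Nat.choose_succ_right_eq (p - 2) k
      have hc := congrArg (fun n : ℕ => (n : ZMod p)) this
      push_cast at hc
      simpa using hc
    have hsub : ((p - 2 - k : ℕ) : ZMod p) = -((k : ZMod p) + 2) := by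
      rw [Nat.cast_sub (by omega : k ≤ p - 2), Nat.cast_sub (by omega : 2 ≤ p),
        ZMod.natCast_self]
      push_cast
      ring
    have := key.trans (by rw [ih hk', hsub])
    have goal' : ((p - 2).choose (k + 1) : ZMod p) * ((k : ZMod p) + 1)
        = ((-1 : ZMod p) ^ (k + 1) * (((k + 1 : ℕ) : ZMod p) + 1)) * ((k : ZMod p) + 1) := by
      rw [this, pow_succ]
      push_cast
      ring
    exact mul_right_cancel₀ hcast goal'

lemma sum_range_p (p : ℕ) [NeZero p] (f : ZMod p → ZMod p) :
    ∑ k ∈ Finset.range p, f (k : ZMod p) = ∑ x : ZMod p, f x := by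
  exact Finset.sum_nbij' (i := fun k => (k : ZMod p)) (j := fun x => x.val)
    (fun a _ => Finset.mem_univ _)
    (fun x _ => Finset.mem_range.mpr (ZMod.val_lt x))
    (fun a ha => ZMod.val_cast_of_lt (Finset.mem_range.mp ha))
    (fun x _ => ZMod.natCast_rightInverse x)
    (fun a _ => rfl)

/-- For λ = (λ₀,…,λ_{p−1}) ∈ B(𝔽_p), the (p−2)-fold iterated commutator [λ,σ,…,σ] in
    W(𝔽_p) equals (−α+β, −2α+β, …, −(p−1)α+β, β), where α = λ₀+⋯+λ_{p−1} and
    β = λ₁ + 2λ₂ + ⋯ + (p−1)λ_{p−1}.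
    (The iterated commutator is Δ^{p−2}(λ), here computed additively via `DeltaF`; the
    entry at index j ∈ {0,…,p−1} is −(j+1)α+β, which at j = p−1 equals β since pα = 0
    in 𝔽_p.) -/
theorem statement18 (p : ℕ) [Fact p.Prime] (hp : Odd p) (v : ZMod p → ZMod p) :
    (DeltaF p (ZMod p))^[p - 2] v
      = fun j : ZMod p => -(j + 1) * (∑ t : ZMod p, v t) + ∑ t : ZMod p, t * v t := by
  have hprime := (Fact.out : p.Prime)
  have hp3 : 3 ≤ p := by
    rcases hp with ⟨m, hm⟩
    have := hprime.two_le
    omega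
  haveI : NeZero p := ⟨by omega⟩
  funext j
  rw [iter_formula]
  have hps : p - 2 + 1 = p - 1 := by omega
  rw [hps]
  have h1 : ∀ k ∈ range (p - 1),
      (-1 : ZMod p) ^ (p - 2 + k) * ((p - 2).choose k : ZMod p) * v (j - k)
      = -(((k : ZMod p) + 1) * v (j - k)) := by
    intro k hk
    have hk2 : k ≤ p - 2 := by have := Finset.mem_range.mp hk; omega
    rw [choose_mod_p p k hk2]
    have hodd : Odd (p - 2 + k + k) := by
      rcases hp with ⟨m, hm⟩
      exact ⟨m - 1 + k, by omega⟩
    have : (-1 : ZMod p) ^ (p - 2 + k) * (-1 : ZMod p) ^ k = -1 := by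
      rw [← pow_add]
      exact Odd.neg_one_pow hodd
    calc (-1 : ZMod p) ^ (p - 2 + k) * ((-1 : ZMod p) ^ k * ((k : ZMod p) + 1)) * v (j - k)
        = ((-1 : ZMod p) ^ (p - 2 + k) * (-1 : ZMod p) ^ k) * (((k : ZMod p) + 1) * v (j - k)) := by
          ring
      _ = -(((k : ZMod p) + 1) * v (j - k)) := by rw [this]; ring
  rw [Finset.sum_congr rfl h1]
  have h2 : ∑ k ∈ range (p - 1), -(((k : ZMod p) + 1) * v (j - k))
      = ∑ k ∈ range p, -(((k : ZMod p) + 1) * v (j - k)) := by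
    apply Finset.sum_subset (Finset.range_subset_range.mpr (by omega : p - 1 ≤ p))
    intro k hk hk'
    have hkp : k = p - 1 := by
      have h1 := Finset.mem_range.mp hk
      have h2 : ¬ k < p - 1 := fun h => hk' (Finset.mem_range.mpr h)
      omega
    have : ((k : ZMod p) + 1) = 0 := by
      rw [hkp, Nat.cast_sub (by omega : 1 ≤ p), ZMod.natCast_self]
      push_cast; ring
    rw [this]
    simp
  rw [h2, sum_range_p p (fun x => -((x + 1) * v (j - x)))]
  rw [Fintype.sum_equiv (Equiv.subLeft j) _ (fun t => -((j - t + 1) * v t))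
    (fun x => by simp [Equiv.subLeft])]
  rw [Finset.mul_sum, ← Finset.sum_add_distrib]
  apply Finset.sum_congr rfl
  intro t _
  ring
end
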